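/- arXiv:2302.14585 — 6 statements merged into one kernel-verified Lean document; each statement's English description precedes it below -/
import Mathlib

section
/- If a partial orientation O of the n-dimensional hypercube is partially Szabó–Welzl, then orienting every unoriented edge from the endpoint with more 1-coordinates to the endpoint with fewer 1-coordinates (i.e., 'downwards') yields an orientation satisfying the Szabó–Welzl condition for every pair of distinct vertices. -/
/-- A partial orientation of the `n`-cube assigns each vertex and dimension a sign,
where `0` means the half-edge is unoriented. -/
def PartialSW {n : ℕ} (O : (Fin n → Bool) → Fin n → SignType) : Prop :=
  ∀ v w : Fin n → Bool, v ≠ w →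
    (∀ i, v i ≠ w i → O v i = 0 ∧ O w i = 0) ∨
    (∃ i, v i ≠ w i ∧ ((O v i = 1 ∧ O w i = -1) ∨ (O v i = -1 ∧ O w i = 1)))

/-- The downward completion: every unoriented half-edge is oriented from the endpoint
with more 1-coordinates to the one with fewer, i.e. `+` at a vertex with `v i = 1`. -/
def downward {n : ℕ} (O : (Fin n → Bool) → Fin n → SignType) :
    (Fin n → Bool) → Fin n → SignType :=
  fun v i => if O v i = 0 then (if v i then 1 else -1) else O v i

theorem stmt0 {n : ℕ} (O : (Fin n → Bool) → Fin n → SignType) (h : PartialSW O) :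
    ∀ v w : Fin n → Bool, v ≠ w →
      ∃ i, v i ≠ w i ∧ downward O v i ≠ downward O w i := by
  intro v w hvw
  rcases h v w hvw with h0 | ⟨i, hi, hc⟩
  · obtain ⟨i, hi⟩ := Function.ne_iff.mp hvw
    obtain ⟨hv0, hw0⟩ := h0 i hi
    refine ⟨i, hi, ?_⟩
    simp only [downward, hv0, hw0, if_pos]
    cases hv : v i <;> cases hw : w i <;> simp_all
  · refine ⟨i, hi, ?_⟩
    rcases hc with ⟨hv, hw⟩ | ⟨hv, hw⟩ <;>
      simp [downward, hv, hw]
end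

section
/- An orientation O of the n-cube is a unique sink orientation (every nonempty face contains exactly one sink of that face) if and only if for every pair of distinct vertices v,w there exists a dimension i with v_i ≠ w_i and O(v)_i ≠ O(w)_i, assuming edges are oriented consistently (O(v)_i = + iff O(v ⊕ e_i)_i = -). -/
/-!
If distinct vertices always span a dimension in which they differ and are oriented alike, then
for every face `f` the map reading the orientation on the free coordinates of `f` and the vertex
itself on the fixed ones is injective, hence bijective on the finite cube; the sinks of `f` are
exactly the preimages of one point, so there is exactly one.

Conversely, reversing all edges of one dimension `j` preserves the USO property: a face split
along `j` has two facet sinks, and its own sink is the one whose `j`-edge is incoming, so after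
the reversal it is the other one. If `v ≠ w` violated the condition, reversing the dimensions
outgoing at `v` would make both `v` and `w` sinks of the face they span.
-/

/-- A face of the `n`-cube, given by fixing some coordinates. -/
def memFace {n : ℕ} (f : Fin n → Option Bool) (v : Fin n → Bool) : Prop :=
  ∀ i, ∀ b, f i = some b → v i = b

/-- `v` is a sink of the face `f`: it lies in `f` and all half-edges in dimensions
spanned by `f` are incoming (`false` = `-`). -/
def isSinkOf {n : ℕ} (O : (Fin n → Bool) → Fin n → Bool)
    (f : Fin n → Option Bool) (v : Fin n → Bool) : Prop :=
  memFace f v ∧ ∀ i, f i = none → O v i = false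

/-- A unique sink orientation: every (nonempty) face has exactly one sink. -/
def IsUSO {n : ℕ} (O : (Fin n → Bool) → Fin n → Bool) : Prop :=
  ∀ f : Fin n → Option Bool, ∃! v, isSinkOf O f v

/-- Edges are oriented consistently. -/
def Consistent {n : ℕ} (O : (Fin n → Bool) → Fin n → Bool) : Prop :=
  ∀ v i, O (Function.update v i (!(v i))) i = !(O v i)

open Function

variable {n : ℕ} {O O' : (Fin n → Bool) → Fin n → Bool} {f : Fin n → Option Bool}
  {v : Fin n → Bool}

theorem isSinkOf_congr (h : ∀ u i, f i = none → O u i = O' u i) :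
    isSinkOf O f v ↔ isSinkOf O' f v :=
  and_congr_right' <| forall_congr' fun i => imp_congr_right fun hi => by rw [h v i hi]

theorem isSinkOf_iff_update {j : Fin n} (hj : f j = none) :
    isSinkOf O f v ↔ isSinkOf O (update f j (some (v j))) v ∧ O v j = false := by
  constructor
  · rintro ⟨hmem, hsink⟩
    refine ⟨⟨fun i b hb => ?_, fun i hi => hsink i ?_⟩, hsink j hj⟩
    · by_cases hij : i = j
      · subst hij; simpa using hb
      · exact hmem i b (by simpa [hij] using hb)
    · by_cases hij : i = j
      · simp [hij] at hi
      · simpa [hij] using hi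
  · rintro ⟨⟨hmem, hsink⟩, hvj⟩
    refine ⟨fun i b hb => hmem i b ?_, fun i hi => ?_⟩
    · by_cases hij : i = j
      · subst hij; simp [hj] at hb
      · simpa [hij] using hb
    · by_cases hij : i = j
      · subst hij; exact hvj
      · exact hsink i (by simpa [hij] using hi)

theorem IsUSO.of_flip {j : Fin n} (hO : IsUSO O) (hne : ∀ v i, i ≠ j → O' v i = O v i)
    (hj : ∀ v, O' v j = !O v j) : IsUSO O' := by
  intro f
  cases hfj : f j with
  | some b =>
    have hiff : ∀ v, isSinkOf O' f v ↔ isSinkOf O f v := fun v =>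
      isSinkOf_congr fun u i hi => hne u i (by rintro rfl; simp [hfj] at hi)
    simpa only [hiff] using hO f
  | none =>
    have hiff : ∀ v, isSinkOf O' f v ↔
        isSinkOf O (update f j (some (v j))) v ∧ O v j = true := fun v => by
      rw [isSinkOf_iff_update hfj, hj, Bool.not_eq_false']
      exact and_congr_left' (isSinkOf_congr fun u i hi => hne u i (by rintro rfl; simp at hi))
    obtain ⟨s, hs, hs_uniq⟩ := hO f
    rw [isSinkOf_iff_update hfj] at hs
    obtain ⟨t, ht, ht_uniq⟩ := hO (update f j (some (!s j)))
    have htj : t j = !s j := ht.1 j _ (by simp)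
    refine ⟨t, (hiff t).2 ⟨htj ▸ ht, ?_⟩, fun u hu => ?_⟩
    · by_contra h
      have := hs_uniq t ((isSinkOf_iff_update hfj).2 ⟨htj ▸ ht, by simpa using h⟩)
      simp [this] at htj
    · obtain ⟨hu, huj⟩ := (hiff u).1 hu
      cases Bool.eq_or_eq_not (u j) (s j) with
      | inl h =>
        have := (hO _).unique (h ▸ hu) hs.1
        simp [this, hs.2] at huj
      | inr h => exact ht_uniq u (h ▸ hu)

def flipDims (O : (Fin n → Bool) → Fin n → Bool) (S : Finset (Fin n)) :
    (Fin n → Bool) → Fin n → Bool :=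
  fun v i => if i ∈ S then !O v i else O v i

theorem IsUSO.flipDims (hO : IsUSO O) (S : Finset (Fin n)) : IsUSO (flipDims O S) := by
  classical
  induction S using Finset.induction_on with
  | empty => convert hO using 1; funext v i; simp [_root_.flipDims]
  | insert j S hjS ih =>
    refine ih.of_flip (j := j) (fun v i hij => by simp [_root_.flipDims, hij]) fun v => ?_
    simp [_root_.flipDims, hjS]

theorem IsUSO.exists_ne_and_ne (hO : IsUSO O) {w : Fin n → Bool} (hvw : v ≠ w) :
    ∃ i, v i ≠ w i ∧ O v i ≠ O w i := by
  classical
  by_contra! h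
  let f : Fin n → Option Bool := fun i => if v i = w i then some (v i) else none
  let O' := _root_.flipDims O (Finset.univ.filter fun i => O v i = true)
  have hv : isSinkOf O' f v := by
    refine ⟨fun i b hb => ?_, fun i _ => ?_⟩
    · by_cases hi : v i = w i <;> simp_all [f]
    · cases hvi : O v i <;> simp [O', _root_.flipDims, hvi]
  have hw : isSinkOf O' f w := by
    refine ⟨fun i b hb => ?_, fun i hi => ?_⟩
    · by_cases hi : v i = w i <;> simp_all [f]
    · have hi : v i ≠ w i := by simpa [f] using hi
      cases hvi : O v i <;> simp [O', _root_.flipDims, ← h i hi, hvi]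
  exact hvw ((hO.flipDims _ f).unique hv hw)

def faceOutmap (O : (Fin n → Bool) → Fin n → Bool) (f : Fin n → Option Bool)
    (v : Fin n → Bool) : Fin n → Bool :=
  fun i => if f i = none then O v i else v i

theorem isSinkOf_iff_faceOutmap_eq :
    isSinkOf O f v ↔ faceOutmap O f v = fun i => (f i).getD false := by
  refine ⟨fun ⟨hmem, hsink⟩ => funext fun i => ?_, fun h => ⟨fun i b hb => ?_, fun i hi => ?_⟩⟩
  · cases hfi : f i with
    | none => simp [faceOutmap, hfi, hsink i hfi]
    | some b => simp [faceOutmap, hfi, hmem i b hfi]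
  · simpa [faceOutmap, hb] using congrFun h i
  · simpa [faceOutmap, hi] using congrFun h i

theorem faceOutmap_injective (h : ∀ v w, v ≠ w → ∃ i, v i ≠ w i ∧ O v i ≠ O w i) :
    Injective (faceOutmap O f) := by
  intro v w hvw
  by_contra hne
  obtain ⟨i, hvi, hOi⟩ := h v w hne
  have := congrFun hvw i
  by_cases hfi : f i = none <;> simp_all [faceOutmap]

theorem isUSO_of_forall_exists_ne_and_ne
    (h : ∀ v w, v ≠ w → ∃ i, v i ≠ w i ∧ O v i ≠ O w i) : IsUSO O := fun f => by
  have hinj := faceOutmap_injective (f := f) h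
  simpa only [isSinkOf_iff_faceOutmap_eq] using
    Bijective.existsUnique ⟨hinj, Finite.injective_iff_surjective.mp hinj⟩ _

theorem stmt1_general {n : ℕ} (O : (Fin n → Bool) → Fin n → Bool) :
    IsUSO O ↔ ∀ v w : Fin n → Bool, v ≠ w →
      ∃ i, v i ≠ w i ∧ O v i ≠ O w i :=
  ⟨fun hO _ _ => hO.exists_ne_and_ne, isUSO_of_forall_exists_ne_and_ne⟩

/-- Szabó–Welzl: an orientation is a USO iff every pair of distinct vertices spans a
dimension in which their half-edges are oriented in the same direction. -/
theorem stmt1 {n : ℕ} (O : (Fin n → Bool) → Fin n → Bool) (hc : Consistent O) :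
    IsUSO O ↔ ∀ v w : Fin n → Bool, v ≠ w →
      ∃ i, v i ≠ w i ∧ O v i ≠ O w i :=
  stmt1_general O
end

section
/- Let O be a USO of the n-cube and let f be a hypervertex face of O. Replacing the orientation of the edges inside f by any USO of a cube of the same dimension as f yields again a USO of the whole n-cube. -/
/-- The face `f` is a hypervertex of `O`: in every dimension not spanned by `f`,
all vertices of `f` are oriented the same way. -/
def IsHypervertex {n : ℕ} (O : (Fin n → Bool) → Fin n → Bool)
    (f : Fin n → Option Bool) : Prop :=
  ∀ i, f i ≠ none → ∀ v w, memFace f v → memFace f w → O v i = O w i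

/-- Intersection of two faces (taking `g`'s value where defined, else `f`'s). -/
def faceInter {n : ℕ} (g f : Fin n → Option Bool) : Fin n → Option Bool :=
  fun i => match g i with
  | some b => some b
  | none => f i

lemma faceInter_g {n : ℕ} {g f : Fin n → Option Bool} {i : Fin n} {b : Bool}
    (h : g i = some b) : faceInter g f i = some b := by
  simp [faceInter, h]

lemma faceInter_none {n : ℕ} {g f : Fin n → Option Bool} {i : Fin n} :
    faceInter g f i = none ↔ g i = none ∧ f i = none := by
  cases hg : g i <;> simp [faceInter, hg]

lemma mem_faceInter_left {n : ℕ} {g f : Fin n → Option Bool} {v : Fin n → Bool}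
    (h : memFace (faceInter g f) v) : memFace g v :=
  fun i b hb => h i b (faceInter_g hb)

lemma mem_faceInter_of {n : ℕ} {g f : Fin n → Option Bool} {v : Fin n → Bool}
    (hg : memFace g v) (hf : memFace f v) : memFace (faceInter g f) v := by
  intro i b hb
  cases hgi : g i with
  | some b' =>
    have : b' = b := by simpa [faceInter, hgi] using hb
    subst this
    exact hg i _ hgi
  | none =>
    simp only [faceInter, hgi] at hb
    exact hf i b hb

lemma mem_faceInter_right {n : ℕ} {g f : Fin n → Option Bool} {u v : Fin n → Bool}
    (hug : memFace g u) (huf : memFace f u) (h : memFace (faceInter g f) v) :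
    memFace f v := by
  intro i b hb
  cases hgi : g i with
  | none => exact h i b (by simp [faceInter, hgi, hb])
  | some b' =>
    have h1 : v i = b' := h i b' (faceInter_g hgi)
    have h2 : u i = b' := hug i b' hgi
    have h3 : u i = b := huf i b hb
    rw [h1, ← h2, h3]

/-- Replacing the orientation inside a hypervertex face `f` of a USO `O` by an
arbitrary USO (i.e. the new orientation `O'` agrees with `O` outside `f` and in
dimensions not spanned by `f`, and restricted to faces contained in `f` it has
unique sinks) again yields a USO of the whole cube. -/
theorem stmt3 {n : ℕ} (O O' : (Fin n → Bool) → Fin n → Bool)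
    (f : Fin n → Option Bool)
    (hUSO : IsUSO O)
    (hhyper : IsHypervertex O f)
    (hsame : ∀ v i, (¬ memFace f v ∨ f i ≠ none) → O' v i = O v i)
    (hinside : ∀ g : Fin n → Option Bool,
      (∀ v, memFace g v → memFace f v) → ∃! v, isSinkOf O' g v) :
    IsUSO O' := by
  intro g
  obtain ⟨s, hs, hsuniq⟩ := hUSO g
  by_cases hsf : memFace f s
  · -- the O-sink of g lies in f; take the O'-sink of g ∩ f
    set h := faceInter g f with hh
    have hsub : ∀ v, memFace h v → memFace f v :=
      fun v hv => mem_faceInter_right hs.1 hsf hv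
    obtain ⟨t, ht, htuniq⟩ := hinside h hsub
    have htf : memFace f t := hsub t ht.1
    have htg : memFace g t := mem_faceInter_left ht.1
    -- key: for i with g i = none and f i ≠ none, every vertex of f points false
    have key : ∀ i, g i = none → f i ≠ none → ∀ v, memFace f v → O v i = false := by
      intro i hgi hfi v hvf
      have := hhyper i hfi v s hvf hsf
      rw [this]
      exact hs.2 i hgi
    refine ⟨t, ⟨htg, ?_⟩, ?_⟩
    · intro i hgi
      cases hfi : f i with
      | none =>
        exact ht.2 i (faceInter_none.mpr ⟨hgi, hfi⟩)
      | some b =>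
        have hfi' : f i ≠ none := by simp [hfi]
        rw [hsame t i (Or.inr hfi')]
        exact key i hgi hfi' t htf
    · rintro w ⟨hwg, hwsink⟩
      by_cases hwf : memFace f w
      · refine htuniq w ⟨mem_faceInter_of hwg hwf, ?_⟩
        intro i hi
        exact hwsink i (faceInter_none.mp hi).1
      · -- w outside f: it is an O-sink of g, hence equals s ∈ f, contradiction
        have : isSinkOf O g w := by
          refine ⟨hwg, fun i hgi => ?_⟩
          rw [← hsame w i (Or.inl hwf)]
          exact hwsink i hgi
        have := hsuniq w this
        exact absurd (this ▸ hwf) (by simp [hsf])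
  · -- the O-sink of g lies outside f; it is also the unique O'-sink
    refine ⟨s, ⟨hs.1, fun i hgi => ?_⟩, ?_⟩
    · rw [hsame s i (Or.inl hsf)]
      exact hs.2 i hgi
    · rintro w ⟨hwg, hwsink⟩
      by_cases hwf : memFace f w
      · -- derive a contradiction: then the O-sink of g ∩ f is an O-sink of g in f
        exfalso
        set h := faceInter g f with hh
        have hsub : ∀ v, memFace h v → memFace f v :=
          fun v hv => mem_faceInter_right hwg hwf hv
        obtain ⟨t, ht, _⟩ := hUSO h
        have htf : memFace f t := hsub t ht.1
        have htg : memFace g t := mem_faceInter_left ht.1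
        have hts : isSinkOf O g t := by
          refine ⟨htg, fun i hgi => ?_⟩
          cases hfi : f i with
          | none => exact ht.2 i (faceInter_none.mpr ⟨hgi, hfi⟩)
          | some b =>
            have hfi' : f i ≠ none := by simp [hfi]
            have := hhyper i hfi' t w htf hwf
            rw [this, ← hsame w i (Or.inr hfi')]
            exact hwsink i hgi
        have := hsuniq t hts
        exact hsf (this ▸ htf)
      · have : isSinkOf O g w := by
          refine ⟨hwg, fun i hgi => ?_⟩
          rw [← hsame w i (Or.inl hwf)]
          exact hwsink i hgi
        exact hsuniq w this
end

section
/- For every n ≥ 1 and every deterministic algorithm that queries vertices of the n-cube and receives their full orientation vectors in {-,+}^n, there exists a USO of the n-cube such that none of the first n queried vertices is the global sink; hence any deterministic sink-finding algorithm on n-dimensional USOs requires at least n + 1 vertex queries in the worst case (n queries to know a non-queried sink location, as in the adversarial argument maintaining a hypersink subcube shrinking by one dimension per query). -/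
/-- The history of a deterministic algorithm `alg` run against orientation `O`:
a list of queried vertices together with the received orientation vectors. -/
def histAux {n : ℕ}
    (alg : List ((Fin n → Bool) × (Fin n → Bool)) → (Fin n → Bool))
    (O : (Fin n → Bool) → Fin n → Bool) : ℕ → List ((Fin n → Bool) × (Fin n → Bool))
  | 0 => []
  | k + 1 => histAux alg O k ++ [(alg (histAux alg O k), O (alg (histAux alg O k)))]

/-- The `k`-th vertex queried by `alg` when run against `O`. -/
def query {n : ℕ}
    (alg : List ((Fin n → Bool) × (Fin n → Bool)) → (Fin n → Bool))
    (O : (Fin n → Bool) → Fin n → Bool) (k : ℕ) : Fin n → Bool :=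
  alg (histAux alg O k)

/-!
The adversary answers every query with an orientation `v ↦ (v i ^^ g v i)ᵢ` in which `g v i`
depends only on the coordinates of `v` below `i`. Such orientations are USOs: the sink of a face
solves a triangular system, whose unique solution is reached after `n` rounds of substitution.

The adversary commits to the global sink `p` one coordinate per query, choosing `p k` opposite to
the `k`-th queried vertex. At a vertex `v` it directs the edges up to the first coordinate where
`v` leaves `p` towards `p`, and all further edges towards `0`. That answer only depends on `p` up
to this coordinate; hence the first `k` answers, and with them the `k`-th query, are already
determined by `p 0, …, p (k - 1)`, so no commitment is ever revised. After `k` queries the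
vertices agreeing with `p` below `k` form the shrinking hypersink.
-/

open Function

section Triangular

variable {n : ℕ} {α β : Type*}

def DependsOnLower (F : (Fin n → α) → Fin n → β) : Prop :=
  ∀ v w i, (∀ j < i, v j = w j) → F v i = F w i

namespace DependsOnLower

variable {F : (Fin n → α) → Fin n → α}

theorem iterate_apply_eq (hF : DependsOnLower F) :
    ∀ m (v w : Fin n → α) (i : Fin n), (i : ℕ) < m → F^[m] v i = F^[m] w i
  | 0, _, _, _, hi => absurd hi (Nat.not_lt_zero _)
  | m + 1, v, w, i, hi => by
    rw [iterate_succ_apply', iterate_succ_apply']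
    exact hF _ _ i fun j hj => iterate_apply_eq hF m v w j (by omega)

theorem iterate_eq (hF : DependsOnLower F) (v w : Fin n → α) : F^[n] v = F^[n] w :=
  funext fun i => hF.iterate_apply_eq n v w i i.isLt

theorem isFixedPt_iterate (hF : DependsOnLower F) (v : Fin n → α) : IsFixedPt F (F^[n] v) := by
  rw [IsFixedPt, ← iterate_succ_apply' F n v, iterate_succ_apply]
  exact hF.iterate_eq _ _

theorem eq_of_isFixedPt (hF : DependsOnLower F) {v w : Fin n → α} (hv : IsFixedPt F v) (hw : IsFixedPt F w) :
    v = w := by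
  rw [← (hv.iterate n).eq, ← (hw.iterate n).eq]
  exact hF.iterate_eq v w

end DependsOnLower

end Triangular

section XorOrientation

variable {n : ℕ} {g : (Fin n → Bool) → Fin n → Bool}

def xorOrient (g : (Fin n → Bool) → Fin n → Bool) : (Fin n → Bool) → Fin n → Bool :=
  fun v i => v i ^^ g v i

theorem xorOrient_eq_false_iff {v : Fin n → Bool} {i : Fin n} :
    xorOrient g v i = false ↔ v i = g v i := by
  simp [xorOrient]

theorem forall_xorOrient_eq_false_iff {v : Fin n → Bool} :
    (∀ i, xorOrient g v i = false) ↔ IsFixedPt g v := by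
  simp only [xorOrient_eq_false_iff, IsFixedPt, funext_iff]
  exact forall_congr' fun _ => eq_comm

theorem consistent_xorOrient (hg : DependsOnLower g) : Consistent (xorOrient g) := by
  intro v i
  have : g (update v i (!v i)) i = g v i :=
    hg _ _ i fun j hj => update_of_ne hj.ne _ _
  simp [xorOrient, this]

theorem isSinkOf_xorOrient_iff {f : Fin n → Option Bool} {v : Fin n → Bool} :
    isSinkOf (xorOrient g) f v ↔ IsFixedPt (fun v i => (f i).getD (g v i)) v := by
  simp only [isSinkOf, memFace, xorOrient_eq_false_iff, IsFixedPt, funext_iff]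
  refine ⟨fun ⟨hface, hfree⟩ i => ?_, fun h => ⟨fun i b hb => ?_, fun i hi => ?_⟩⟩
  · cases hi : f i with
    | none => simp [hfree i hi]
    | some b => simp [hface i b hi]
  · simpa [hb] using (h i).symm
  · simpa [hi] using (h i).symm

theorem isUSO_xorOrient (hg : DependsOnLower g) : IsUSO (xorOrient g) := by
  intro f
  have hF : DependsOnLower fun v i => (f i).getD (g v i) :=
    fun v w i hvw => by simp only [hg v w i hvw]
  simp only [isSinkOf_xorOrient_iff]
  exact ⟨_, hF.isFixedPt_iterate fun _ => false, fun w hw => hF.eq_of_isFixedPt hw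
    (hF.isFixedPt_iterate _)⟩

end XorOrientation

section PrefixOrientation

variable {n : ℕ}

def towardsPrefix (p v : Fin n → Bool) (i : Fin n) : Bool :=
  if ∀ j < i, v j = p j then p i else false

def prefixOrient (p : Fin n → Bool) : (Fin n → Bool) → Fin n → Bool :=
  xorOrient (towardsPrefix p)

theorem dependsOnLower_towardsPrefix (p : Fin n → Bool) : DependsOnLower (towardsPrefix p) := by
  intro v w i hvw
  have : (∀ j < i, v j = p j) ↔ ∀ j < i, w j = p j :=
    forall₂_congr fun j hj => by rw [hvw j hj]
  simp only [towardsPrefix, this]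

theorem consistent_prefixOrient (p : Fin n → Bool) : Consistent (prefixOrient p) :=
  consistent_xorOrient (dependsOnLower_towardsPrefix p)

theorem isUSO_prefixOrient (p : Fin n → Bool) : IsUSO (prefixOrient p) :=
  isUSO_xorOrient (dependsOnLower_towardsPrefix p)

theorem forall_prefixOrient_eq_false_iff {p v : Fin n → Bool} :
    (∀ i, prefixOrient p v i = false) ↔ v = p := by
  have hp : IsFixedPt (towardsPrefix p) p := funext fun i => by simp [towardsPrefix]
  refine ⟨fun hv => ?_, fun hv => ?_⟩
  · exact (dependsOnLower_towardsPrefix p).eq_of_isFixedPt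
      (forall_xorOrient_eq_false_iff.mp hv) hp
  · exact forall_xorOrient_eq_false_iff.mpr (hv ▸ hp)

theorem prefixOrient_congr {p p' v : Fin n → Bool} {d : Fin n} (hd : v d ≠ p d)
    (hpp' : ∀ j ≤ d, p j = p' j) : prefixOrient p v = prefixOrient p' v := by
  have : towardsPrefix p v = towardsPrefix p' v := by
    funext i
    rcases lt_or_ge d i with hdi | hid
    · have h : ¬ ∀ j < i, v j = p j := fun h => hd (h d hdi)
      have h' : ¬ ∀ j < i, v j = p' j := fun h => hd ((h d hdi).trans (hpp' d le_rfl).symm)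
      simp only [towardsPrefix, if_neg h, if_neg h']
    · have h : (∀ j < i, v j = p j) ↔ ∀ j < i, v j = p' j :=
        forall₂_congr fun j hj => by rw [hpp' j (hj.le.trans hid)]
      simp only [towardsPrefix, h, hpp' i hid]
  unfold prefixOrient xorOrient
  rw [this]

end PrefixOrientation

section Adversary

variable {n : ℕ} (alg : List ((Fin n → Bool) × (Fin n → Bool)) → (Fin n → Bool))

def adversaryPrefix : ℕ → Fin n → Bool
  | 0 => fun _ => false
  | k + 1 => fun i =>
    if (i : ℕ) = k then !query alg (prefixOrient (adversaryPrefix k)) k i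
    else adversaryPrefix k i

theorem adversaryPrefix_of_lt {m : ℕ} {i : Fin n} (hi : (i : ℕ) < m) :
    adversaryPrefix alg m i = !query alg (prefixOrient (adversaryPrefix alg i)) i i := by
  induction m with
  | zero => omega
  | succ m ih =>
    rw [adversaryPrefix]
    dsimp only
    split_ifs with him
    · subst him; rfl
    · exact ih (by omega)

theorem histAux_prefixOrient_adversaryPrefix {k m : ℕ} (hkm : k ≤ m) (hmn : m ≤ n) :
    histAux alg (prefixOrient (adversaryPrefix alg m)) k =
      histAux alg (prefixOrient (adversaryPrefix alg k)) k := by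
  induction k generalizing m with
  | zero => rfl
  | succ k ih =>
    set q := query alg (prefixOrient (adversaryPrefix alg k)) k
    have hk : k < n := by omega
    have hanswer : prefixOrient (adversaryPrefix alg m) q =
        prefixOrient (adversaryPrefix alg (k + 1)) q := by
      refine prefixOrient_congr (d := ⟨k, hk⟩) ?_ fun j hj => ?_
      · rw [adversaryPrefix_of_lt alg (show k < m by omega)]
        exact Bool.not_ne_self _ ∘ Eq.symm
      · have hj : (j : ℕ) ≤ k := hj
        rw [adversaryPrefix_of_lt alg (show (j : ℕ) < m by omega),
          adversaryPrefix_of_lt alg (show (j : ℕ) < k + 1 by omega)]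
    rw [histAux, histAux, ih (m := m) (by omega) hmn, ih (m := k + 1) (by omega) (by omega)]
    exact congrArg (fun a => _ ++ [(q, a)]) hanswer

theorem query_prefixOrient_adversaryPrefix_ne {k : ℕ} (hk : k < n) :
    query alg (prefixOrient (adversaryPrefix alg n)) k ≠ adversaryPrefix alg n := by
  intro h
  have hcoord := congrFun h ⟨k, hk⟩
  rw [query, histAux_prefixOrient_adversaryPrefix alg hk.le le_rfl,
    adversaryPrefix_of_lt alg hk] at hcoord
  exact Bool.not_ne_self _ hcoord.symm

end Adversary

theorem stmt8_general {n : ℕ}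
    (alg : List ((Fin n → Bool) × (Fin n → Bool)) → (Fin n → Bool)) :
    ∃ O : (Fin n → Bool) → Fin n → Bool, Consistent O ∧ IsUSO O ∧
      ∀ k < n, ¬ (∀ i, O (query alg O k) i = false) :=
  ⟨prefixOrient (adversaryPrefix alg n), consistent_prefixOrient _, isUSO_prefixOrient _,
    fun _ hk hsink => query_prefixOrient_adversaryPrefix_ne alg hk
      (forall_prefixOrient_eq_false_iff.mp hsink)⟩

/-- For every deterministic algorithm there is a USO of the `n`-cube such that none
of the first `n` queried vertices is the global sink; hence at least `n + 1` vertex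
queries are necessary to find the sink. -/
theorem stmt8 {n : ℕ} (hn : 1 ≤ n)
    (alg : List ((Fin n → Bool) × (Fin n → Bool)) → (Fin n → Bool)) :
    ∃ O : (Fin n → Bool) → Fin n → Bool, Consistent O ∧ IsUSO O ∧
      ∀ k < n, ¬ (∀ i, O (query alg O k) i = false) :=
  stmt8_general alg
end

section
/- Composition of localizations acts pointwise: if partial orientations O_1 and O_2 of the n-cube satisfy the partial Szabó–Welzl condition and O' is defined by O'(v)_i = O_1(v)_i if O_1(v)_i ≠ 0 and O'(v)_i = O_2(v)_i otherwise, and if O_2 is a full orientation satisfying the Szabó–Welzl condition, then O' satisfies the Szabó–Welzl condition (hence is a USO when consistent across edges). -/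
/-- Full Szabó–Welzl condition for a (total) orientation. -/
def FullSW {n : ℕ} (O : (Fin n → Bool) → Fin n → SignType) : Prop :=
  ∀ v w : Fin n → Bool, v ≠ w →
    ∃ i, v i ≠ w i ∧ O v i ≠ O w i ∧ O v i ≠ 0 ∧ O w i ≠ 0

/-- The composition of partial orientations: fill in the unoriented parts of `O₁`
using `O₂`. -/
def composeOr {n : ℕ} (O₁ O₂ : (Fin n → Bool) → Fin n → SignType) :
    (Fin n → Bool) → Fin n → SignType :=
  fun v i => if O₁ v i ≠ 0 then O₁ v i else O₂ v i

/-- If `O₁` and `O₂` are partially Szabó–Welzl and `O₂` is a full orientation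
satisfying the Szabó–Welzl condition, then the composition satisfies the
Szabó–Welzl condition. -/
theorem stmt12 {n : ℕ} (O₁ O₂ : (Fin n → Bool) → Fin n → SignType)
    (h1 : PartialSW O₁) (h2 : PartialSW O₂)
    (hfull : ∀ v i, O₂ v i ≠ 0) (hSW : FullSW O₂) :
    FullSW (composeOr O₁ O₂) := by
  intro v w hvw
  rcases h1 v w hvw with hzero | ⟨i, hi, hcase⟩
  · obtain ⟨i, hi, hne, hv0, hw0⟩ := hSW v w hvw
    obtain ⟨hz1, hz2⟩ := hzero i hi
    refine ⟨i, hi, ?_, ?_, ?_⟩ <;> simp [composeOr, hz1, hz2, hne, hv0, hw0]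
  · refine ⟨i, hi, ?_, ?_, ?_⟩ <;>
      rcases hcase with ⟨ha, hb⟩ | ⟨ha, hb⟩ <;>
      simp [composeOr, ha, hb]
end

section
/- In Klaus' reduction from a non-degenerate P-matroid extension to a hypercube orientation, a vertex v of the n-cube is the global sink of the constructed orientation O if and only if the fundamental circuit C(B(v), q) has all entries nonnegative; in that case C(B(v), q) solves the OMCP. -/
abbrev GS (n : ℕ) := Option (Fin n × Bool)

def IsCircuitSet {E : Type*} (C : Set (E → SignType)) : Prop :=
  (0 : E → SignType) ∉ C ∧
  (∀ X ∈ C, -X ∈ C) ∧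
  (∀ X ∈ C, ∀ Y ∈ C, (∀ e, X e ≠ 0 → Y e ≠ 0) → X = Y ∨ X = -Y) ∧
  (∀ X ∈ C, ∀ Y ∈ C, X ≠ -Y → ∀ e, X e = 1 → Y e = -1 →
    ∃ Z ∈ C, ∀ f, (Z f = 1 → f ≠ e ∧ (X f = 1 ∨ Y f = 1)) ∧
               (Z f = -1 → f ≠ e ∧ (X f = -1 ∨ Y f = -1)))

/-- Klaus' orientation: the half-edge of `v` in dimension `i` is incoming (`-1`)
iff the fundamental circuit `C(B(v), q)` is `+` on the element of `{s_i, t_i}`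
contained in `B(v)` (which is `s_i` if `v i = 0` and `t_i` if `v i = 1`). -/
def klausO {n : ℕ} (Cf : (Fin n → Bool) → (GS n → SignType)) :
    (Fin n → Bool) → Fin n → SignType :=
  fun v i => if Cf v (some (i, v i)) = 1 then -1 else 1

/-- In Klaus' reduction from a non-degenerate P-matroid extension, a vertex `v` is
the global sink of the constructed orientation iff the fundamental circuit
`C(B(v), q)` has all entries nonnegative; in that case it solves the OMCP. -/
theorem stmt15 {n : ℕ} (C : Set (GS n → SignType)) (hC : IsCircuitSet C)
    (Cf : (Fin n → Bool) → (GS n → SignType))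
    -- `Cf v` is the fundamental circuit `C(B(v), q)`
    (hmem : ∀ v, Cf v ∈ C)
    (hq : ∀ v, Cf v none = 1)
    (hsupp : ∀ v (i : Fin n) (b : Bool), Cf v (some (i, b)) ≠ 0 → b = v i)
    -- non-degeneracy: `Cf v` is nonzero on all elements of `B(v) ∪ {q}`
    (hnondeg : ∀ v (i : Fin n), Cf v (some (i, v i)) ≠ 0) :
    ∀ v : Fin n → Bool,
      ((∀ i, klausO Cf v i = -1) ↔ (∀ e, Cf v e ≠ -1)) ∧
      ((∀ i, klausO Cf v i = -1) →
        (∀ e, Cf v e ≠ -1) ∧ Cf v none = 1 ∧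
        ∀ i : Fin n, Cf v (some (i, false)) * Cf v (some (i, true)) = 0) := by
  intro v
  have key : (∀ i, klausO Cf v i = -1) ↔ (∀ e, Cf v e ≠ -1) := by
    constructor
    · intro h e
      match e with
      | none => rw [hq v]; decide
      | some (i, b) =>
        by_cases hb : b = v i
        · subst hb
          have := h i
          unfold klausO at this
          split at this
          · next h1 => rw [h1]; decide
          · simp at this
        · intro hne
          exact hb (hsupp v i b (by rw [hne]; decide))
    · intro h i
      unfold klausO
      have h1 := h (some (i, v i))
      have h2 := hnondeg v i
      have : Cf v (some (i, v i)) = 1 := by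
        cases h3 : Cf v (some (i, v i)) with
        | zero => exact absurd h3 h2
        | neg => exact absurd h3 h1
        | pos => rfl
      simp [this]
  refine ⟨key, fun h => ⟨key.mp h, hq v, fun i => ?_⟩⟩
  cases hv : v i
  · have : Cf v (some (i, true)) = 0 := by
      by_contra hne
      have := hsupp v i true hne
      rw [hv] at this; exact Bool.noConfusion this
    rw [this, mul_zero]
  · have : Cf v (some (i, false)) = 0 := by
      by_contra hne
      have := hsupp v i false hne
      rw [hv] at this; exact Bool.noConfusion this
    rw [this, zero_mul]
end
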